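/- arXiv:1704.06002 — 2 statements merged into one kernel-verified Lean document; each statement's English description precedes it below -/
import Mathlib

section
/- Let p > q ≥ 1 be integers and n ≥ p+q. Define f(x) = (x-1)^{n-p-q}·[x³ - (p+2q+1)x² + (q²+pq+p+q)x - q] - q and g(x) = (x-1)^{n-p-q}·[x³ - (q+2p+1)x² + (p²+pq+q+p)x - p] - p. Then for all real x > p+q, f(x) - g(x) > 0. -/
/-- For integers `p > q ≥ 1`, `n ≥ p+q`, and real `x > p+q`, we have `f(x) - g(x) > 0`, where
`f(x) = (x-1)^{n-p-q}[x³-(p+2q+1)x²+(q²+pq+p+q)x-q]-q` and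
`g(x) = (x-1)^{n-p-q}[x³-(q+2p+1)x²+(p²+pq+q+p)x-p]-p`. -/
theorem stmt0 (n p q : ℕ) (hq : 1 ≤ q) (hqp : q < p) (hn : p + q ≤ n)
    (x : ℝ) (hx : (p : ℝ) + (q : ℝ) < x) :
    ((x - 1) ^ (n - p - q) *
        (x ^ 3 - ((p : ℝ) + 2 * q + 1) * x ^ 2 + ((q : ℝ) ^ 2 + p * q + p + q) * x - q) - q) -
      ((x - 1) ^ (n - p - q) *
        (x ^ 3 - ((q : ℝ) + 2 * p + 1) * x ^ 2 + ((p : ℝ) ^ 2 + p * q + q + p) * x - p) - p)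
      > 0 := by
  have h1 : (1:ℝ) ≤ q := by exact_mod_cast hq
  have h2 : (q:ℝ) + 1 ≤ p := by exact_mod_cast hqp
  have hpq : (0:ℝ) < (p:ℝ) - q := by linarith
  have hA : (0:ℝ) < (x - 1) ^ (n - p - q) := pow_pos (by linarith) _
  have hB : (0:ℝ) < x ^ 2 - ((p:ℝ) + q) * x + 1 := by nlinarith
  nlinarith [mul_pos hpq (mul_pos hA hB)]
end

section
/- Let G ≠ directed cycle be a strongly connected digraph with vertices v₁,…,vₙ, and let P = v₁v₂⋯v_k (k ≥ 3) be a directed path in G such that the outdegree of v_i equals 1 for each i = 2,…,k−1. If X = (x₁,…,xₙ)ᵀ is the Perron vector of Q(G), then x₂ < x₃ < ⋯ < x_{k−1} < x_k. -/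
open Matrix

/-- Adjacency matrix of a digraph given by the arc relation `E`. -/
def adjMatrix {V : Type} [Fintype V] (E : V → V → Prop) [DecidableRel E] : Matrix V V ℝ :=
  fun i j => if E i j then 1 else 0

/-- Outdegree of a vertex in the digraph `E`. -/
def outdeg {V : Type} [Fintype V] (E : V → V → Prop) [DecidableRel E] (i : V) : ℕ :=
  (Finset.univ.filter (fun j => E i j)).card

/-- Signless Laplacian `Q = D⁺ + A` of the digraph `E`. -/
def signlessLaplacian {V : Type} [Fintype V] [DecidableEq V] (E : V → V → Prop)
    [DecidableRel E] : Matrix V V ℝ :=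
  Matrix.diagonal (fun i => (outdeg E i : ℝ)) + adjMatrix E

/-- Q-index: the spectral radius of the signless Laplacian of the digraph `E`. -/
noncomputable def qIndex {V : Type} [Fintype V] [DecidableEq V] (E : V → V → Prop)
    [DecidableRel E] : ℝ :=
  sSup ((fun z => ‖z‖) '' spectrum ℂ ((signlessLaplacian E).map Complex.ofReal))

/-- A digraph is strongly connected if every vertex reaches every vertex by a directed path. -/
def StronglyConnected {V : Type} (E : V → V → Prop) : Prop :=
  ∀ i j : V, Relation.ReflTransGen E i j

/-!
At a vertex `a` whose only out-neighbour is `b`, the eigen-equation `(Q X)_a = q X_a` reads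
`X_a + X_b = q X_a`, i.e. `X_b = (q - 1) X_a`, so it suffices that `q > 2`.
That holds because `G` is not a cycle: some vertex `u` has outdegree `≠ 1`, hence `≥ 2` by strong
connectivity, and then `q X_u = d⁺(u) X_u + ∑_{u → j} X_j > 2 X_u`.
-/

section

variable {V : Type} [Fintype V] (G : V → V → Prop) [DecidableRel G]

lemma signlessLaplacian_mulVec_apply [DecidableEq V] (X : V → ℝ) (a : V) :
    (signlessLaplacian G *ᵥ X) a
      = (outdeg G a : ℝ) * X a + ∑ j ∈ Finset.univ.filter (fun j => G a j), X j := by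
  simp only [signlessLaplacian, adjMatrix, mulVec, dotProduct, Matrix.add_apply,
    Matrix.diagonal_apply, add_mul, ite_mul, one_mul, zero_mul, Finset.sum_add_distrib,
    Finset.sum_ite_eq, Finset.mem_univ, if_true]
  rw [Finset.sum_ite, Finset.sum_const_zero, add_zero]

variable {G}

lemma outdeg_pos_of_stronglyConnected (hsc : StronglyConnected G) {u w : V} (hw : w ≠ u) :
    0 < outdeg G u := by
  obtain h | ⟨c, hc, -⟩ := (hsc u w).cases_head
  · exact absurd h.symm hw
  · exact Finset.card_pos.mpr ⟨c, by simpa using hc⟩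

lemma filter_adj_eq_singleton_of_outdeg_eq_one {a b : V} (hab : G a b)
    (ha : outdeg G a = 1) : Finset.univ.filter (fun j => G a j) = {b} := by
  obtain ⟨c, hc⟩ := Finset.card_eq_one.mp ha
  have hb : b ∈ Finset.univ.filter (fun j => G a j) := by simpa using hab
  rw [hc, Finset.mem_singleton] at hb
  rw [hc, hb]

variable [DecidableEq V] {X : V → ℝ} {q : ℝ}

lemma two_lt_of_two_le_outdeg (hpos : ∀ i, 0 < X i) (heig : signlessLaplacian G *ᵥ X = q • X)
    {u : V} (hu : 2 ≤ outdeg G u) : 2 < q := by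
  have hequ := congrFun heig u
  rw [signlessLaplacian_mulVec_apply, Pi.smul_apply, smul_eq_mul] at hequ
  have hnonempty : (Finset.univ.filter (fun j => G u j)).Nonempty :=
    Finset.card_pos.mp (lt_of_lt_of_le two_pos hu)
  have hsum : 0 < ∑ j ∈ Finset.univ.filter (fun j => G u j), X j :=
    Finset.sum_pos (fun j _ => hpos j) hnonempty
  have hdeg : (2 : ℝ) * X u ≤ (outdeg G u : ℝ) * X u :=
    mul_le_mul_of_nonneg_right (by exact_mod_cast hu) (hpos u).le
  exact lt_of_mul_lt_mul_right (by linarith) (hpos u).le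

lemma apply_eq_sub_one_mul_of_outdeg_eq_one (heig : signlessLaplacian G *ᵥ X = q • X)
    {a b : V} (hab : G a b) (ha : outdeg G a = 1) : X b = (q - 1) * X a := by
  have hequ := congrFun heig a
  rw [signlessLaplacian_mulVec_apply, filter_adj_eq_singleton_of_outdeg_eq_one hab ha,
    Finset.sum_singleton, ha, Pi.smul_apply, smul_eq_mul] at hequ
  push_cast at hequ
  linarith

end

/-- Let `G` be a strongly connected digraph that is not a directed cycle (equivalently, some
vertex has outdegree `≠ 1`), let `v 0, v 1, …, v (k-1)` (`k ≥ 3`, 0-based) be a directed path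
whose interior vertices all have outdegree `1`, and let `X` be the Perron vector of `Q(G)`.
Then `X (v 1) < X (v 2) < ⋯ < X (v (k-1))`. -/
theorem stmt7 {V : Type} [Fintype V] [DecidableEq V]
    (G : V → V → Prop) [DecidableRel G]
    (hsc : StronglyConnected G) (hnotcycle : ∃ u, outdeg G u ≠ 1)
    (k : ℕ) (v : Fin k → V)
    (hpath : ∀ (i : ℕ) (h : i + 1 < k), G (v ⟨i, by omega⟩) (v ⟨i + 1, h⟩))
    (hdeg : ∀ (i : ℕ) (_ : 1 ≤ i) (h : i + 1 < k), outdeg G (v ⟨i, by omega⟩) = 1)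
    (X : V → ℝ) (hpos : ∀ i, 0 < X i)
    (heig : signlessLaplacian G *ᵥ X = qIndex G • X) :
    ∀ (i : ℕ) (_ : 1 ≤ i) (h : i + 1 < k), X (v ⟨i, by omega⟩) < X (v ⟨i + 1, h⟩) := by
  intro i hi h
  obtain ⟨u, hu⟩ := hnotcycle
  have hvi := hdeg i hi h
  have hne : v ⟨i, by omega⟩ ≠ u := fun heq => hu (heq ▸ hvi)
  have hu2 : 2 ≤ outdeg G u := by
    have := outdeg_pos_of_stronglyConnected hsc hne
    omega
  have hq := two_lt_of_two_le_outdeg hpos heig hu2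
  rw [apply_eq_sub_one_mul_of_outdeg_eq_one heig (hpath i h) hvi]
  nlinarith [hpos (v ⟨i, by omega⟩)]
end
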